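/- In a dual weak brace S, the set Fix(S) = {b ∈ S : for all a ∈ S, a + b = a ∘ b} is a left ideal of S, i.e., it is a full inverse subsemigroup of (S,+) (containing all idempotents, closed under + and additive inverses) and satisfies λ_a(Fix(S)) ⊆ Fix(S) for every a ∈ S, where λ_a(b) = -a + a ∘ b. -/

import Mathlib

/-!
The idempotents of `(S,+)` and `(S,∘)` coincide and are central in the Clifford semigroup `(S,∘)`.
Writing `e_x = -x + x`, the element `-(a∘b) + a∘b` equals both `λ_a(e_b)` and `e_b ∘ e_a`, so
`λ_a(u) = u ∘ e_a` for every idempotent `u`. From this, `+` and `∘` agree on idempotents, and then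
`a ∘ u = a + u` for all `a` and idempotent `u`. Hence `E(S) ⊆ Fix(S)`, elements of `Fix(S)`
commute additively with idempotents, and closure under `+` and `-` is a direct computation.
Finally `λ_a(b) = e_a + b` for `b ∈ Fix(S)`, a sum of two elements of `Fix(S)`.
-/

/-- A weak brace: `(S,+)` and `(S,∘)` are inverse semigroups satisfying
`a ∘ (b + c) = a ∘ b - a + a ∘ c` and `a ∘ a⁻ = -a + a`. -/
class WeakBrace (S : Type*) where
  add : S → S → S
  mul : S → S → S
  neg : S → S
  inv : S → S
  add_assoc : ∀ a b c : S, add (add a b) c = add a (add b c)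
  mul_assoc : ∀ a b c : S, mul (mul a b) c = mul a (mul b c)
  add_reg : ∀ a : S, add (add a (neg a)) a = a
  neg_reg : ∀ a : S, add (add (neg a) a) (neg a) = neg a
  neg_unique : ∀ a x : S, add (add a x) a = a → add (add x a) x = x → x = neg a
  mul_reg : ∀ a : S, mul (mul a (inv a)) a = a
  inv_reg : ∀ a : S, mul (mul (inv a) a) (inv a) = inv a
  inv_unique : ∀ a x : S, mul (mul a x) a = a → mul (mul x a) x = x → x = inv a
  distrib : ∀ a b c : S, mul a (add b c) = add (add (mul a b) (neg a)) (mul a c)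
  link : ∀ a : S, mul a (inv a) = add (neg a) a

/-- A dual weak brace: a weak brace whose multiplicative semigroup is Clifford. -/
class DualWeakBrace (S : Type*) extends WeakBrace S where
  clifford : ∀ a : S, WeakBrace.mul a (WeakBrace.inv a) = WeakBrace.mul (WeakBrace.inv a) a

namespace WeakBrace

variable {S : Type*} [WeakBrace S]

/-- `λ_a(b) = -a + a ∘ b`. -/
def lam (a b : S) : S := add (neg a) (mul a b)

/-- `ρ_b(a) = (-a + a ∘ b)⁻ ∘ a ∘ b`. -/
def rho (b a : S) : S := mul (mul (inv (lam a b)) a) b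

/-- `a · b = -a + a ∘ b - b`. -/
def cdot (a b : S) : S := add (add (neg a) (mul a b)) (neg b)

/-- `a⁰ = a - a`. -/
def sq (a : S) : S := add a (neg a)

/-- Additive idempotent (the sets of idempotents of `+` and `∘` coincide). -/
def IsIdem (e : S) : Prop := add e e = e

/-- `[a,b]₊ = -a - b + a + b`. -/
def brkt (a b : S) : S := add (add (add (neg a) (neg b)) a) b

/-- `I` is a full inverse subsemigroup of `(S,+)`. -/
def IsFullAddSub (I : Set S) : Prop :=
  (∀ e : S, IsIdem e → e ∈ I) ∧ (∀ x ∈ I, ∀ y ∈ I, add x y ∈ I) ∧ (∀ x ∈ I, neg x ∈ I)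

/-- `I` is a normal subsemigroup of `(S,+)`. -/
def IsNormalAdd (I : Set S) : Prop :=
  IsFullAddSub I ∧ ∀ a : S, ∀ x ∈ I, add (add (neg a) x) a ∈ I

/-- `I` is a normal subsemigroup of `(S,∘)`. -/
def IsNormalMul (I : Set S) : Prop :=
  (∀ e : S, IsIdem e → e ∈ I) ∧ (∀ x ∈ I, ∀ y ∈ I, mul x y ∈ I) ∧ (∀ x ∈ I, inv x ∈ I) ∧
    ∀ a : S, ∀ x ∈ I, mul (mul (inv a) x) a ∈ I

/-- `I` is a left ideal of the weak brace `S`. -/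
def IsLeftIdeal (I : Set S) : Prop :=
  IsFullAddSub I ∧ ∀ a : S, ∀ x ∈ I, lam a x ∈ I

/-- `I` is an ideal of the weak brace `S`. -/
def IsIdeal (I : Set S) : Prop :=
  IsNormalAdd I ∧ (∀ a : S, ∀ x ∈ I, lam a x ∈ I) ∧ IsNormalMul I

/-- The socle `Soc(S)`. -/
def Soc (S : Type*) [WeakBrace S] : Set S :=
  {a | ∀ b : S, add a b = mul a b ∧ add a b = add b a}

/-- The annihilator `Ann(S)`. -/
def Ann (S : Type*) [WeakBrace S] : Set S :=
  {a | ∀ b : S, add a b = add b a ∧ add a b = mul a b ∧ mul a b = mul b a}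

/-- The congruence `a ∼_I b ⟺ a⁰ = b⁰ and -a + b ∈ I` associated to an ideal `I`. -/
def simI (I : Set S) (a b : S) : Prop := sq a = sq b ∧ add (neg a) b ∈ I

/-- Membership in the inverse subsemigroup of `(S,+)` generated by a set `X`. -/
inductive genAdd (X : Set S) : S → Prop
  | base : ∀ x ∈ X, genAdd X x
  | add : ∀ a b : S, genAdd X a → genAdd X b → genAdd X (add a b)
  | neg : ∀ a : S, genAdd X a → genAdd X (neg a)

/-- `X · Y`: the additive inverse subsemigroup generated by the elements `x · y`. -/
def cdotSet (X Y : Set S) : Set S :=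
  {s | genAdd {z | ∃ x ∈ X, ∃ y ∈ Y, z = cdot x y} s}

/-- `S^(n)` for `n ≥ 1`: `S^(1) = S`, `S^(n+1) = S^(n) · S`. -/
def Spow (S : Type*) [WeakBrace S] : ℕ → Set S
  | 0 => Set.univ
  | 1 => Set.univ
  | (n+2) => cdotSet (Spow S (n+1)) Set.univ

end WeakBrace

structure IsInverseSemigroup {S : Type*} (op : S → S → S) (iv : S → S) : Prop where
  assoc : ∀ a b c, op (op a b) c = op a (op b c)
  op_iv_op : ∀ a, op (op a (iv a)) a = a
  iv_op_iv : ∀ a, op (op (iv a) a) (iv a) = iv a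
  eq_iv : ∀ a x, op (op a x) a = a → op (op x a) x = x → x = iv a

namespace IsInverseSemigroup

variable {S : Type*} {op : S → S → S} {iv : S → S} {e f : S}

theorem iv_eq_self (h : IsInverseSemigroup op iv) (he : op e e = e) : iv e = e :=
  (h.eq_iv e e (by rw [he, he]) (by rw [he, he])).symm

theorem iv_iv (h : IsInverseSemigroup op iv) (a : S) : iv (iv a) = a :=
  (h.eq_iv (iv a) a (h.iv_op_iv a) (h.op_iv_op a)).symm

theorem op_iv_idem (h : IsInverseSemigroup op iv) (a : S) :
    op (op a (iv a)) (op a (iv a)) = op a (iv a) := by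
  rw [← h.assoc, h.op_iv_op]

theorem iv_op_idem (h : IsInverseSemigroup op iv) (a : S) :
    op (op (iv a) a) (op (iv a) a) = op (iv a) a := by
  rw [← h.assoc, h.iv_op_iv]

theorem op_op_of_idem (h : IsInverseSemigroup op iv) (he : op e e = e) (t : S) :
    op e (op e t) = op e t := by
  rw [← h.assoc, he]

/-- With `x = (ef)⁻¹`, the element `f x e` is also an inverse of `ef`, hence equals `x`; this
forces `x`, and therefore `ef = x⁻¹`, to be idempotent. -/
theorem op_idem (h : IsInverseSemigroup op iv) (he : op e e = e) (hf : op f f = f) :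
    op (op e f) (op e f) = op e f := by
  obtain ⟨x, hx⟩ : ∃ x, iv (op e f) = x := ⟨_, rfl⟩
  have hxefx (t : S) : op x (op e (op f (op x t))) = op x t := by
    simpa only [h.assoc, hx] using congrArg (op · t) (h.iv_op_iv (op e f))
  have hefxef : op e (op f (op x (op e f))) = op e f := by
    simpa only [h.assoc, hx] using h.op_iv_op (op e f)
  have hfxe : op (op f x) e = x := by
    refine (h.eq_iv (op e f) _ ?_ ?_).trans hx
    · simpa only [h.assoc, h.op_op_of_idem he, h.op_op_of_idem hf] using hefxef
    · simp only [h.assoc, h.op_op_of_idem he, h.op_op_of_idem hf, hxefx]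
  have hxx : op x x = x :=
    calc op x x = op (op (op f x) e) (op (op f x) e) := by rw [hfxe]
      _ = op (op f x) e := by simp only [h.assoc, hxefx]
      _ = x := hfxe
  have hefx : op e f = x := by rw [← h.iv_eq_self hxx, ← hx, h.iv_iv]
  rw [hefx, hxx]

theorem op_comm_of_idem (h : IsInverseSemigroup op iv) (he : op e e = e) (hf : op f f = f) :
    op e f = op f e := by
  have hef := h.op_idem he hf
  have hfe : op f e = iv (op e f) := by
    refine h.eq_iv _ _ ?_ ?_
    · simpa only [h.assoc, h.op_op_of_idem he, h.op_op_of_idem hf] using hef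
    · simpa only [h.assoc, h.op_op_of_idem he, h.op_op_of_idem hf] using h.op_idem hf he
  rw [hfe, h.iv_eq_self hef]

theorem iv_op (h : IsInverseSemigroup op iv) (a b : S) : iv (op a b) = op (iv b) (iv a) := by
  have hc := h.op_comm_of_idem (h.op_iv_idem b) (h.iv_op_idem a)
  refine (h.eq_iv _ _ ?_ ?_).symm
  · calc op (op (op a b) (op (iv b) (iv a))) (op a b)
        = op a (op (op (op b (iv b)) (op (iv a) a)) b) := by simp only [h.assoc]
      _ = op (op a (op (iv a) a)) (op (op b (iv b)) b) := by rw [hc]; simp only [h.assoc]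
      _ = op a b := by rw [h.op_iv_op b, ← h.assoc, h.op_iv_op a]
  · calc op (op (op (iv b) (iv a)) (op a b)) (op (iv b) (iv a))
        = op (op (iv b) (op (op (iv a) a) (op b (iv b)))) (iv a) := by simp only [h.assoc]
      _ = op (op (iv b) (op b (iv b))) (op (op (iv a) a) (iv a)) := by
          rw [← hc]; simp only [h.assoc]
      _ = op (iv b) (iv a) := by rw [h.iv_op_iv a, ← h.assoc, h.iv_op_iv b]

theorem op_comm_of_clifford (h : IsInverseSemigroup op iv)
    (hcl : ∀ a, op a (iv a) = op (iv a) a) (he : op e e = e) (a : S) : op a e = op e a := by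
  have hea := h.op_comm_of_idem he (h.iv_op_idem a)
  have key : op (op (iv a) a) e = op (op a e) (iv a) := by
    have := hcl (op a e)
    rw [h.iv_op, h.iv_eq_self he] at this
    calc op (op (iv a) a) e = op (op (op (iv a) a) e) e := by rw [h.assoc _ e e, he]
      _ = op (op e (iv a)) (op a e) := by rw [← hea]; simp only [h.assoc]
      _ = op (op a e) (op e (iv a)) := this.symm
      _ = op (op a e) (iv a) := by rw [← h.assoc, h.assoc a, he]
  calc op a e = op a (op e (op (iv a) a)) := by
        rw [hea, ← h.assoc, ← h.assoc, h.op_iv_op]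
    _ = op (op (op (iv a) a) e) a := by rw [key]; simp only [h.assoc]
    _ = op e (op (op a (iv a)) a) := by rw [← hea, hcl]; simp only [h.assoc]
    _ = op e a := by rw [h.op_iv_op]

theorem op_iv_op_eq_of_clifford (h : IsInverseSemigroup op iv)
    (hcl : ∀ a, op a (iv a) = op (iv a) a) (a b : S) :
    op (op a b) (iv (op a b)) = op (op b (iv b)) (op a (iv a)) :=
  calc op (op a b) (iv (op a b)) = op (op a (op b (iv b))) (iv a) := by
        rw [h.iv_op]; simp only [h.assoc]
    _ = op (op (op b (iv b)) a) (iv a) := by rw [h.op_comm_of_clifford hcl (h.op_iv_idem b)]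
    _ = op (op b (iv b)) (op a (iv a)) := h.assoc _ _ _

end IsInverseSemigroup

namespace WeakBrace

variable {S : Type*}

local infixl:65 " ∔ " => add
local infixl:70 " ⊚ " => mul
local prefix:max "⊖" => neg

def Fix (S : Type*) [WeakBrace S] : Set S := {b | ∀ a : S, a ∔ b = a ⊚ b}

section

variable [WeakBrace S] {e f : S}

theorem isInverseSemigroup_add : IsInverseSemigroup (add : S → S → S) neg :=
  ⟨add_assoc, add_reg, neg_reg, neg_unique⟩

theorem isInverseSemigroup_mul : IsInverseSemigroup (mul : S → S → S) inv :=
  ⟨mul_assoc, mul_reg, inv_reg, inv_unique⟩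

theorem IsIdem.neg_eq (he : IsIdem e) : ⊖e = e :=
  isInverseSemigroup_add.iv_eq_self he

theorem IsIdem.add_comm (he : IsIdem e) (hf : IsIdem f) : e ∔ f = f ∔ e :=
  isInverseSemigroup_add.op_comm_of_idem he hf

theorem IsIdem.add (he : IsIdem e) (hf : IsIdem f) : IsIdem (e ∔ f) :=
  isInverseSemigroup_add.op_idem he hf

theorem isIdem_neg_add_self (a : S) : IsIdem (⊖a ∔ a) :=
  isInverseSemigroup_add.iv_op_idem a

theorem isIdem_add_neg_self (a : S) : IsIdem (a ∔ ⊖a) :=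
  isInverseSemigroup_add.op_iv_idem a

theorem add_neg_add_self (a : S) : a ∔ (⊖a ∔ a) = a := by
  rw [← add_assoc, add_reg]

theorem IsIdem.mul_self (he : IsIdem e) : e ⊚ e = e := by
  have h := link e
  rw [he.neg_eq, he] at h
  simpa only [h] using mul_reg e

theorem isIdem_of_mul_self (he : e ⊚ e = e) : IsIdem e := by
  have h := link e
  rw [isInverseSemigroup_mul.iv_eq_self he, he] at h
  calc e ∔ e = (⊖e ∔ e) ∔ (⊖e ∔ e) := by rw [← h]
    _ = e := by rw [isIdem_neg_add_self e, ← h]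

theorem neg_mul_eq_lam_neg_add_neg (a b : S) : ⊖(a ⊚ b) = lam a (⊖b) ∔ ⊖a := by
  unfold lam
  refine (neg_unique _ _ ?_ ?_).symm
  · calc a ⊚ b ∔ (⊖a ∔ a ⊚ ⊖b ∔ ⊖a) ∔ a ⊚ b = a ⊚ b ∔ ⊖a ∔ a ⊚ ⊖b ∔ ⊖a ∔ a ⊚ b := by
          simp only [add_assoc]
      _ = a ⊚ (b ∔ ⊖b ∔ b) := by rw [distrib, distrib]
      _ = a ⊚ b := by rw [add_reg]
  · calc ⊖a ∔ a ⊚ ⊖b ∔ ⊖a ∔ a ⊚ b ∔ (⊖a ∔ a ⊚ ⊖b ∔ ⊖a)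
        = ⊖a ∔ (a ⊚ ⊖b ∔ ⊖a ∔ a ⊚ b ∔ ⊖a ∔ a ⊚ ⊖b) ∔ ⊖a := by simp only [add_assoc]
      _ = ⊖a ∔ a ⊚ (⊖b ∔ b ∔ ⊖b) ∔ ⊖a := by rw [distrib a (⊖b ∔ b), distrib]
      _ = ⊖a ∔ a ⊚ ⊖b ∔ ⊖a := by rw [neg_reg]

theorem neg_mul_add_mul_eq_lam (a b : S) : ⊖(a ⊚ b) ∔ a ⊚ b = lam a (⊖b ∔ b) := by
  rw [neg_mul_eq_lam_neg_add_neg]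
  unfold lam
  rw [distrib]
  simp only [add_assoc]

end

section

variable [DualWeakBrace S] {b c p q u : S}

theorem mul_comm_of_isIdem (hu : IsIdem u) (a : S) : a ⊚ u = u ⊚ a :=
  isInverseSemigroup_mul.op_comm_of_clifford DualWeakBrace.clifford hu.mul_self a

theorem neg_mul_add_mul_eq_mul (a b : S) : ⊖(a ⊚ b) ∔ a ⊚ b = (⊖b ∔ b) ⊚ (⊖a ∔ a) := by
  simpa only [link] using isInverseSemigroup_mul.op_iv_op_eq_of_clifford DualWeakBrace.clifford a b

theorem lam_of_isIdem (hu : IsIdem u) (a : S) : lam a u = u ⊚ (⊖a ∔ a) := by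
  have h := (neg_mul_add_mul_eq_lam a u).symm.trans (neg_mul_add_mul_eq_mul a u)
  rwa [hu.neg_eq, hu] at h

theorem IsIdem.mul (hp : IsIdem p) (hq : IsIdem q) : IsIdem (p ⊚ q) :=
  isIdem_of_mul_self (isInverseSemigroup_mul.op_idem hp.mul_self hq.mul_self)

theorem add_mul_eq_mul_of_isIdem (hp : IsIdem p) (hq : IsIdem q) : p ∔ p ⊚ q = p ⊚ q := by
  have h := lam_of_isIdem hq p
  unfold lam at h
  rwa [hp.neg_eq, hp, mul_comm_of_isIdem hp q] at h

theorem add_eq_left_iff_mul_eq_left (hp : IsIdem p) (hq : IsIdem q) : p ∔ q = p ↔ p ⊚ q = p := by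
  constructor
  · intro h
    have hd := distrib p p q
    rw [h, hp.mul_self, hp.neg_eq, hp, add_mul_eq_mul_of_isIdem hp hq] at hd
    exact hd.symm
  · intro h
    calc p ∔ q = p ⊚ q ∔ q := by rw [h]
      _ = q ∔ q ⊚ p := by rw [(hp.mul hq).add_comm hq, ← mul_comm_of_isIdem hp q]
      _ = q ⊚ p := add_mul_eq_mul_of_isIdem hq hp
      _ = p := by rw [mul_comm_of_isIdem hp q, h]

/-- `p ∔ q` and `p ⊚ q` are both the meet of `p` and `q` in the natural order of idempotents,
which by `add_eq_left_iff_mul_eq_left` is the same for `∔` and `⊚`. -/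
theorem mul_eq_add_of_isIdem (hp : IsIdem p) (hq : IsIdem q) : p ⊚ q = p ∔ q := by
  have hs := hp.add hq
  have hm := hp.mul hq
  have hsp : (p ∔ q) ⊚ p = p ∔ q := (add_eq_left_iff_mul_eq_left hs hp).1 <| by
    rw [add_assoc, hq.add_comm hp, ← add_assoc, hp]
  have hsq : (p ∔ q) ⊚ q = p ∔ q := (add_eq_left_iff_mul_eq_left hs hq).1 <| by
    rw [add_assoc, hq]
  have hmp : p ⊚ q ∔ p = p ⊚ q := (add_eq_left_iff_mul_eq_left hm hp).2 <| by
    rw [mul_assoc, mul_comm_of_isIdem hp q, ← mul_assoc, hp.mul_self]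
  have hmq : p ⊚ q ∔ q = p ⊚ q := (add_eq_left_iff_mul_eq_left hm hq).2 <| by
    rw [mul_assoc, hq.mul_self]
  have hsm : p ∔ q ∔ p ⊚ q = p ∔ q := (add_eq_left_iff_mul_eq_left hs hm).2 <| by
    rw [← mul_assoc, hsp, hsq]
  calc p ⊚ q = p ⊚ q ∔ (p ∔ q) := by rw [← add_assoc, hmp, hmq]
    _ = p ∔ q ∔ p ⊚ q := hm.add_comm hs
    _ = p ∔ q := hsm

theorem mul_eq_add_of_isIdem_right (a : S) (hu : IsIdem u) : a ⊚ u = a ∔ u := by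
  set f := a ∔ ⊖a with hf_def
  have hf : IsIdem f := isIdem_add_neg_self a
  have hua : u ⊚ a = u ∔ f ∔ u ⊚ a :=
    calc u ⊚ a = u ⊚ (f ∔ a) := by rw [hf_def, add_reg]
      _ = u ∔ f ∔ u ∔ u ⊚ a := by rw [distrib, mul_eq_add_of_isIdem hu hf, hu.neg_eq]
      _ = u ∔ f ∔ u ⊚ a := by rw [add_assoc u f u, hf.add_comm hu, ← add_assoc u u, hu]
  have hfua : f ∔ u ⊚ a = u ⊚ a :=
    calc f ∔ u ⊚ a = f ∔ (u ∔ f ∔ u ⊚ a) := by rw [← hua]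
      _ = u ∔ f ∔ u ⊚ a := by rw [← add_assoc, ← add_assoc, hf.add_comm hu, add_assoc u f f, hf]
      _ = u ⊚ a := hua.symm
  have hlam : ⊖a ∔ a ⊚ u = ⊖a ∔ a ∔ u := by
    rw [← lam, lam_of_isIdem hu, mul_eq_add_of_isIdem hu (isIdem_neg_add_self a),
      hu.add_comm (isIdem_neg_add_self a)]
  calc a ⊚ u = f ∔ u ⊚ a := by rw [hfua, mul_comm_of_isIdem hu a]
    _ = a ∔ (⊖a ∔ a ⊚ u) := by rw [← mul_comm_of_isIdem hu a, hf_def, add_assoc]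
    _ = a ∔ u := by rw [hlam, ← add_assoc, add_neg_add_self]

theorem mem_fix_of_isIdem (hu : IsIdem u) : u ∈ Fix S :=
  fun a => (mul_eq_add_of_isIdem_right a hu).symm

theorem IsIdem.add_comm_of_mem_fix (hu : IsIdem u) (hb : b ∈ Fix S) : u ∔ b = b ∔ u := by
  rw [hb u, ← mul_comm_of_isIdem hu b, mul_eq_add_of_isIdem_right b hu]

theorem add_mem_fix (hb : b ∈ Fix S) (hc : c ∈ Fix S) : b ∔ c ∈ Fix S := by
  intro a
  rw [distrib, ← hb a, ← hc a]
  calc a ∔ (b ∔ c) = a ∔ (⊖a ∔ a) ∔ b ∔ c := by rw [add_neg_add_self, add_assoc]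
    _ = a ∔ b ∔ ⊖a ∔ (a ∔ c) := by
      rw [add_assoc a, (isIdem_neg_add_self a).add_comm_of_mem_fix hb]
      simp only [add_assoc]

theorem neg_mem_fix (hb : b ∈ Fix S) : ⊖b ∈ Fix S := by
  intro a
  have h : ⊖(a ⊚ ⊖b) = b ∔ ⊖a :=
    calc ⊖(a ⊚ ⊖b) = ⊖a ∔ a ⊚ b ∔ ⊖a := by
          rw [neg_mul_eq_lam_neg_add_neg, isInverseSemigroup_add.iv_iv, lam]
      _ = b ∔ (⊖a ∔ a) ∔ ⊖a := by
          rw [← hb a, ← add_assoc, (isIdem_neg_add_self a).add_comm_of_mem_fix hb]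
      _ = b ∔ ⊖a := by rw [add_assoc b, neg_reg]
  calc a ∔ ⊖b = ⊖(b ∔ ⊖a) := by rw [isInverseSemigroup_add.iv_op, isInverseSemigroup_add.iv_iv]
    _ = a ⊚ ⊖b := by rw [← h, isInverseSemigroup_add.iv_iv]

theorem lam_mem_fix (a : S) (hb : b ∈ Fix S) : lam a b ∈ Fix S := by
  have h : lam a b = ⊖a ∔ a ∔ b := by rw [lam, ← hb a, add_assoc]
  rw [h]
  exact add_mem_fix (mem_fix_of_isIdem (isIdem_neg_add_self a)) hb

end

end WeakBrace

open WeakBrace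
theorem stmt9 {S : Type*} [DualWeakBrace S] :
    IsLeftIdeal {b : S | ∀ a : S, add a b = mul a b} :=
  ⟨⟨fun _ he => mem_fix_of_isIdem he, fun _ hb _ hc => add_mem_fix hb hc,
    fun _ hb => neg_mem_fix hb⟩, fun a _ hb => lam_mem_fix a hb⟩
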